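/- arXiv:2207.04763 — 2 statements merged into one kernel-verified Lean document; each statement's English description precedes it below -/
import Mathlib

section
/- Let M be the 3×9 complex matrix with rows (a_1,a_1,a_2,a_2,a_3,a_3,a_3,a_3,a_9), (a_1,a_1,a_2,a_2,a_8,a_5,a_5,a_4,a_4), (a_7,a_6,a_6,a_6,a_6,a_5,a_5,a_4,a_4), where a_1,…,a_9 ∈ ℂ. If rank(M) ≤ 1 and the sum of all entries of M is 0, then exactly one of the following holds (or M = 0): (i) a_1+a_2=0 and a_i=0 for all other i; (ii) 4a_3+a_9=0 and a_i=0 for all other i; (iii) a_4+a_5=0 and a_i=0 for all other i; (iv) 4a_6+a_7=0 and a_i=0 for all other i. -/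
lemma rank_le_one_minor {m n : Type*} [Fintype m] [Fintype n] [DecidableEq n]
    (M : Matrix m n ℂ) (h : M.rank ≤ 1) (i k : m) (j l : n) :
    M i j * M k l = M i l * M k j := by
  rw [Matrix.rank] at h
  obtain ⟨v, hv⟩ := (Submodule.finrank_le_one_iff_isPrincipal _).mp h
  have hcol : ∀ (j : n), ∃ c : ℂ, ∀ i, M i j = c * v i := by
    intro j
    have hmem : M.mulVecLin (Pi.single j 1) ∈ LinearMap.range M.mulVecLin :=
      LinearMap.mem_range_self _ _
    rw [hv, Submodule.mem_span_singleton] at hmem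
    obtain ⟨c, hc⟩ := hmem
    exact ⟨c, fun i => by
      have := congr_fun hc i
      simp [Matrix.mulVecLin_apply, Matrix.mulVec_single] at this
      simpa using this.symm⟩
  obtain ⟨cj, hj⟩ := hcol j
  obtain ⟨cl, hl⟩ := hcol l
  rw [hj i, hj k, hl i, hl k]; ring

/-- For the 3×9 tile-pattern matrix (the A|BC flattening of the ℂ³⊗ℂ³⊗ℂ³
tile OPB), rank ≤ 1 and total sum 0 force one of four cases. -/
theorem stmt_7 (a₁ a₂ a₃ a₄ a₅ a₆ a₇ a₈ a₉ : ℂ)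
    (M : Matrix (Fin 3) (Fin 9) ℂ)
    (hM : M = !![a₁, a₁, a₂, a₂, a₃, a₃, a₃, a₃, a₉;
                 a₁, a₁, a₂, a₂, a₈, a₅, a₅, a₄, a₄;
                 a₇, a₆, a₆, a₆, a₆, a₅, a₅, a₄, a₄])
    (hrank : M.rank ≤ 1) (hsum : ∑ i, ∑ j, M i j = 0) :
    (a₁ + a₂ = 0 ∧ a₃ = 0 ∧ a₄ = 0 ∧ a₅ = 0 ∧ a₆ = 0 ∧ a₇ = 0 ∧ a₈ = 0 ∧ a₉ = 0) ∨
    (4 * a₃ + a₉ = 0 ∧ a₁ = 0 ∧ a₂ = 0 ∧ a₄ = 0 ∧ a₅ = 0 ∧ a₆ = 0 ∧ a₇ = 0 ∧ a₈ = 0) ∨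
    (a₄ + a₅ = 0 ∧ a₁ = 0 ∧ a₂ = 0 ∧ a₃ = 0 ∧ a₆ = 0 ∧ a₇ = 0 ∧ a₈ = 0 ∧ a₉ = 0) ∨
    (4 * a₆ + a₇ = 0 ∧ a₁ = 0 ∧ a₂ = 0 ∧ a₃ = 0 ∧ a₄ = 0 ∧ a₅ = 0 ∧ a₈ = 0 ∧ a₉ = 0) := by
  subst hM
  have h := fun i k j l => rank_le_one_minor _ hrank i k j l
  have E1 : a₁*a₈ = a₃*a₁ := h 0 1 0 4
  have E2 : a₁*a₅ = a₃*a₁ := h 0 1 0 5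
  have E3 : a₁*a₄ = a₃*a₁ := h 0 1 0 7
  have E4 : a₁*a₄ = a₉*a₁ := h 0 1 0 8
  have E5 : a₁*a₆ = a₁*a₇ := h 1 2 0 1
  have E6 : a₁*a₅ = a₅*a₇ := h 1 2 0 5
  have E7 : a₁*a₆ = a₈*a₇ := h 1 2 0 4
  have E10 : a₂*a₅ = a₃*a₆ := h 0 2 2 5
  have E11 : a₂*a₈ = a₃*a₂ := h 0 1 2 4
  have E12 : a₂*a₅ = a₃*a₂ := h 0 1 2 5
  have E13 : a₂*a₄ = a₃*a₂ := h 0 1 2 7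
  have E14 : a₂*a₄ = a₉*a₂ := h 0 1 2 8
  have E15 : a₂*a₆ = a₁*a₆ := h 1 2 2 1
  have E16 : a₈*a₅ = a₅*a₆ := h 1 2 4 5
  have E17 : a₃*a₄ = a₃*a₅ := h 0 2 5 7
  have E18 : a₉*a₅ = a₃*a₄ := h 0 1 8 5
  have E19 : a₈*a₄ = a₄*a₆ := h 1 2 4 7
  have E20 : a₁*a₄ = a₄*a₇ := h 1 2 0 7
  have E22 : a₉*a₄ = a₃*a₄ := h 0 1 8 7
  have E23 : a₁*a₄ = a₄*a₆ := h 1 2 1 7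
  have E24 : a₃*a₅ = a₃*a₈ := h 0 1 4 5
  have E25 : a₃*a₅ = a₃*a₆ := h 0 2 4 5
  have E26 : a₃*a₇ = a₁*a₆ := h 0 2 4 0
  have E27 : a₉*a₈ = a₃*a₄ := h 0 1 8 4
  have E28 : a₉*a₇ = a₁*a₄ := h 0 2 8 0
  have E29 : a₉*a₆ = a₁*a₄ := h 0 2 8 1
  have E31 : a₈*a₆ = a₁*a₆ := h 1 2 4 1
  have E32 : a₁*a₅ = a₅*a₆ := h 1 2 1 5
  have E33 : a₂*a₇ = a₁*a₆ := h 1 2 2 0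
  simp [Fin.sum_univ_succ] at hsum
  by_cases h1 : a₁ = 0
  · by_cases h2 : a₂ = 0
    · by_cases h5 : a₅ = 0
      · by_cases h4 : a₄ = 0
        · by_cases h3 : a₃ = 0
          · -- only a₆,a₇,a₈,a₉ possibly nonzero
            have p98 : a₉*a₈ = 0 := by linear_combination E27 + a₃*h4
            have p97 : a₉*a₇ = 0 := by linear_combination E28 + a₄*h1
            have p96 : a₉*a₆ = 0 := by linear_combination E29 + a₄*h1
            have p87 : a₈*a₇ = 0 := by linear_combination a₆*h1 - E7
            have p86 : a₈*a₆ = 0 := by linear_combination E31 + a₆*h1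
            by_cases h9 : a₉ = 0
            · by_cases h8 : a₈ = 0
              · exact Or.inr (Or.inr (Or.inr ⟨by
                  linear_combination hsum - 4*h1 - 4*h2 - 4*h3 - 4*h4 - 4*h5 - h8 - h9,
                  h1, h2, h3, h4, h5, h8, h9⟩))
              · have q7 : a₇ = 0 := (mul_eq_zero.mp p87).resolve_left h8
                have q6 : a₆ = 0 := (mul_eq_zero.mp p86).resolve_left h8
                exact absurd (by linear_combination hsum - 4*h1 - 4*h2 - 4*h3 - 4*h4
                  - 4*h5 - 4*q6 - q7 - h9 : a₈ = 0) h8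
            · have q8 : a₈ = 0 := (mul_eq_zero.mp p98).resolve_left h9
              have q7 : a₇ = 0 := (mul_eq_zero.mp p97).resolve_left h9
              have q6 : a₆ = 0 := (mul_eq_zero.mp p96).resolve_left h9
              exact absurd (by linear_combination hsum - 4*h1 - 4*h2 - 4*h3 - 4*h4
                - 4*h5 - 4*q6 - q7 - q8 : a₉ = 0) h9
          · -- a₃ ≠ 0 : case (ii)
            have q8 : a₈ = 0 := by
              have : a₃*a₈ = 0 := by linear_combination a₃*h5 - E24
              exact (mul_eq_zero.mp this).resolve_left h3
            have q6 : a₆ = 0 := by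
              have : a₃*a₆ = 0 := by linear_combination a₃*h5 - E25
              exact (mul_eq_zero.mp this).resolve_left h3
            have q7 : a₇ = 0 := by
              have : a₃*a₇ = 0 := by linear_combination E26 + a₆*h1
              exact (mul_eq_zero.mp this).resolve_left h3
            exact Or.inr (Or.inl ⟨by
              linear_combination hsum - 4*h1 - 4*h2 - 4*h4 - 4*h5 - 4*q6 - q7 - q8,
              h1, h2, h4, h5, q6, q7, q8⟩)
        · -- a₄ ≠ 0, a₅ = 0 : contradiction
          have q3 : a₃ = 0 := by
            have : a₃*a₄ = 0 := by linear_combination E17 + a₃*h5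
            exact (mul_eq_zero.mp this).resolve_right h4
          have q7 : a₇ = 0 := by
            have : a₄*a₇ = 0 := by linear_combination a₄*h1 - E20
            exact (mul_eq_zero.mp this).resolve_left h4
          have q6 : a₆ = 0 := by
            have : a₄*a₆ = 0 := by linear_combination a₄*h1 - E23
            exact (mul_eq_zero.mp this).resolve_left h4
          have q8 : a₈ = 0 := by
            have : a₈*a₄ = 0 := by linear_combination E19 + a₄*q6
            exact (mul_eq_zero.mp this).resolve_right h4
          have q9 : a₉ = 0 := by
            have : a₉*a₄ = 0 := by linear_combination E22 + a₄*q3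
            exact (mul_eq_zero.mp this).resolve_right h4
          exact absurd (by linear_combination hsum/4 - h1 - h2 - q3 - h5 - q6
            - q7/4 - q8/4 - q9/4 : a₄ = 0) h4
      · -- a₅ ≠ 0 : case (iii)
        have q7 : a₇ = 0 := by
          have : a₅*a₇ = 0 := by linear_combination a₅*h1 - E6
          exact (mul_eq_zero.mp this).resolve_left h5
        have q6 : a₆ = 0 := by
          have : a₅*a₆ = 0 := by linear_combination a₅*h1 - E32
          exact (mul_eq_zero.mp this).resolve_left h5
        have q8 : a₈ = 0 := by
          have : a₈*a₅ = 0 := by linear_combination E16 + a₅*q6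
          exact (mul_eq_zero.mp this).resolve_right h5
        have q3 : a₃ = 0 := by
          have : a₃*a₅ = 0 := by linear_combination E24 + a₃*q8
          exact (mul_eq_zero.mp this).resolve_right h5
        have q9 : a₉ = 0 := by
          have : a₉*a₅ = 0 := by linear_combination E18 + a₄*q3
          exact (mul_eq_zero.mp this).resolve_right h5
        exact Or.inr (Or.inr (Or.inl ⟨by
          linear_combination hsum/4 - h1 - h2 - q3 - q6 - q7/4 - q8/4 - q9/4,
          h1, h2, q3, q6, q7, q8, q9⟩))
    · -- a₁ = 0, a₂ ≠ 0 : contradiction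
      have q5 : a₅ = a₃ := mul_left_cancel₀ h2 (by linear_combination E12)
      have q4 : a₄ = a₃ := mul_left_cancel₀ h2 (by linear_combination E13)
      have q9 : a₉ = a₃ := mul_right_cancel₀ h2 (by linear_combination E13 - E14)
      have q8 : a₈ = a₃ := mul_left_cancel₀ h2 (by linear_combination E11)
      have q6 : a₆ = 0 := by
        have : a₂*a₆ = 0 := by linear_combination E15 + a₆*h1
        exact (mul_eq_zero.mp this).resolve_left h2
      have q5z : a₅ = 0 := by
        have : a₂*a₅ = 0 := by linear_combination E10 + a₃*q6
        exact (mul_eq_zero.mp this).resolve_left h2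
      have q3 : a₃ = 0 := q5.symm.trans q5z
      have q7 : a₇ = 0 := by
        have : a₂*a₇ = 0 := by linear_combination E33 + a₆*h1
        exact (mul_eq_zero.mp this).resolve_left h2
      have q4z : a₄ = 0 := q4.trans q3
      have q8z : a₈ = 0 := q8.trans q3
      have q9z : a₉ = 0 := q9.trans q3
      exact absurd (by linear_combination hsum/4 - h1 - q3 - q4z - q5z - q6
        - q7/4 - q8z/4 - q9z/4 : a₂ = 0) h2
  · -- a₁ ≠ 0
    have q8 : a₈ = a₃ := mul_left_cancel₀ h1 (by linear_combination E1)
    have q5 : a₅ = a₃ := mul_left_cancel₀ h1 (by linear_combination E2)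
    have q4 : a₄ = a₃ := mul_left_cancel₀ h1 (by linear_combination E3)
    have q9 : a₉ = a₃ := mul_right_cancel₀ h1 (by linear_combination E3 - E4)
    by_cases h3 : a₃ = 0
    · -- case (i)
      have q4z : a₄ = 0 := q4.trans h3
      have q5z : a₅ = 0 := q5.trans h3
      have q8z : a₈ = 0 := q8.trans h3
      have q9z : a₉ = 0 := q9.trans h3
      have q6 : a₆ = 0 := by
        have : a₁*a₆ = 0 := by linear_combination E7 + a₇*q8 + a₇*h3
        exact (mul_eq_zero.mp this).resolve_left h1
      have q7 : a₇ = 0 := by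
        have : a₁*a₇ = 0 := by linear_combination a₁*q6 - E5
        exact (mul_eq_zero.mp this).resolve_left h1
      exact Or.inl ⟨by linear_combination hsum/4 - h3 - q4z - q5z - q6
        - q7/4 - q8z/4 - q9z/4, h3, q4z, q5z, q6, q7, q8z, q9z⟩
    · -- a₃ ≠ 0 : contradiction
      have h5ne : a₅ ≠ 0 := by rw [q5]; exact h3
      have q7 : a₇ = a₁ := mul_left_cancel₀ h5ne (by linear_combination -E6)
      have q6 : a₆ = a₃ := mul_left_cancel₀ h1
        (by linear_combination E7 + a₇*q8 + a₃*q7)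
      have q7' : a₇ = a₆ := mul_left_cancel₀ h1 (by linear_combination -E5)
      have q1 : a₁ = a₃ := q7.symm.trans (q7'.trans q6)
      have q2 : a₂ = a₃ := mul_right_cancel₀ h3
        (by linear_combination E10 - a₂*q5 + a₃*q6)
      have q7x : a₇ = a₃ := q7'.trans q6
      exact absurd (by linear_combination hsum/27 - (4*q1 + 4*q2 + 4*q4 + 4*q5
        + 4*q6 + q7x + q8 + q9)/27 : a₃ = 0) h3
end

section
/- The tripartite UPB W (the Tiles UPB tensored with |0⟩, plus the two computational layers |i⟩|j⟩|1⟩ and |i⟩|j⟩|2⟩) is not an uncompletable product basis in the bipartition AB|C: there exist 4 vectors φ_6, φ_7, φ_8, φ_9 ∈ ℂ^9 such that W_{AB|C} ∪ {φ_k ⊗ |0⟩ : 6 ≤ k ≤ 9} is an orthogonal basis of ℂ^9 ⊗ ℂ^3. -/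
noncomputable section


def ket (i : Fin 3) : Fin 3 → ℂ := fun j => if j = i then 1 else 0

/-- The A-parts of the Tiles UPB in ℂ³⊗ℂ³. -/
def tA : Fin 5 → (Fin 3 → ℂ)
  | 0 => ket 0
  | 1 => ket 0 - ket 1
  | 2 => ket 2
  | 3 => ket 1 - ket 2
  | 4 => ket 0 + ket 1 + ket 2

/-- The B-parts of the Tiles UPB in ℂ³⊗ℂ³. -/
def tB : Fin 5 → (Fin 3 → ℂ)
  | 0 => ket 0 - ket 1
  | 1 => ket 2
  | 2 => ket 1 - ket 2
  | 3 => ket 0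
  | 4 => ket 0 + ket 1 + ket 2

/-- The Tiles UPB in ℂ³⊗ℂ³. -/
def tiles : Fin 5 → (Fin 3 × Fin 3 → ℂ) := fun k x => tA k x.1 * tB k x.2

/-- The tripartite set W ⊂ ℂ³⊗ℂ³⊗ℂ³. -/
def Wset : Set (Fin 3 × Fin 3 × Fin 3 → ℂ) :=
  {x | ∃ k : Fin 5, x = fun t => tiles k (t.1, t.2.1) * ket 0 t.2.2} ∪
  {x | ∃ i j : Fin 3, x = fun t => ket i t.1 * ket j t.2.1 * ket 1 t.2.2} ∪
  {x | ∃ i j : Fin 3, x = fun t => ket i t.1 * ket j t.2.1 * ket 2 t.2.2}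

-- auxiliary definitions and lemmas

def ketZ (i : Fin 3) : Fin 3 → ℤ := fun j => if j = i then 1 else 0

def tAZ : Fin 5 → (Fin 3 → ℤ)
  | 0 => ketZ 0
  | 1 => ketZ 0 - ketZ 1
  | 2 => ketZ 2
  | 3 => ketZ 1 - ketZ 2
  | 4 => ketZ 0 + ketZ 1 + ketZ 2

def tBZ : Fin 5 → (Fin 3 → ℤ)
  | 0 => ketZ 0 - ketZ 1
  | 1 => ketZ 2
  | 2 => ketZ 1 - ketZ 2
  | 3 => ketZ 0
  | 4 => ketZ 0 + ketZ 1 + ketZ 2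

def phiZ : Fin 4 → (Fin 3 × Fin 3 → ℤ)
  | 0 => fun p => ![![-1,-1,0],![0,2,0],![0,0,0]] p.1 p.2
  | 1 => fun p => ![![-2,-2,3],![0,-2,3],![0,0,0]] p.1 p.2
  | 2 => fun p => ![![-2,-2,-2],![5,-2,-2],![5,0,0]] p.1 p.2
  | 3 => fun p => ![![-2,-2,-2],![-2,-2,-2],![-2,7,7]] p.1 p.2

def phiC : Fin 4 → (Fin 3 × Fin 3 → ℂ) := fun k p => ((phiZ k p : ℤ) : ℂ)

abbrev Idx := (Fin 5) ⊕ (((Fin 3 × Fin 3) ⊕ ((Fin 3 × Fin 3) ⊕ Fin 4)))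

def Vc : Idx → (Fin 3 × Fin 3 × Fin 3 → ℂ)
  | .inl k => fun t => tiles k (t.1, t.2.1) * ket 0 t.2.2
  | .inr (.inl (i, j)) => fun t => ket i t.1 * ket j t.2.1 * ket 1 t.2.2
  | .inr (.inr (.inl (i, j))) => fun t => ket i t.1 * ket j t.2.1 * ket 2 t.2.2
  | .inr (.inr (.inr k)) => fun t => phiC k (t.1, t.2.1) * ket 0 t.2.2

def M : Idx → (Fin 3 × Fin 3 × Fin 3 → ℤ)
  | .inl k => fun t => tAZ k t.1 * tBZ k t.2.1 * ketZ 0 t.2.2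
  | .inr (.inl (i, j)) => fun t => ketZ i t.1 * ketZ j t.2.1 * ketZ 1 t.2.2
  | .inr (.inr (.inl (i, j))) => fun t => ketZ i t.1 * ketZ j t.2.1 * ketZ 2 t.2.2
  | .inr (.inr (.inr k)) => fun t => phiZ k (t.1, t.2.1) * ketZ 0 t.2.2

lemma ket_cast (i j : Fin 3) : ket i j = ((ketZ i j : ℤ) : ℂ) := by
  simp only [ket, ketZ]; split <;> simp

lemma tA_cast (k : Fin 5) (a : Fin 3) : tA k a = ((tAZ k a : ℤ) : ℂ) := by
  fin_cases k <;> simp [tA, tAZ, ket_cast]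

lemma tB_cast (k : Fin 5) (a : Fin 3) : tB k a = ((tBZ k a : ℤ) : ℂ) := by
  fin_cases k <;> simp [tB, tBZ, ket_cast]

lemma hM : ∀ i t, Vc i t = ((M i t : ℤ) : ℂ) := by
  rintro (k | ⟨i, j⟩ | ⟨i, j⟩ | k) t <;>
    simp [Vc, M, tiles, phiC, tA_cast, tB_cast, ket_cast]

lemma M_dot : ∀ i j : Idx, i ≠ j → ∑ t : Fin 3 × Fin 3 × Fin 3, M i t * M j t = 0 := by
  decide

lemma M_self : ∀ i : Idx, ∑ t : Fin 3 × Fin 3 × Fin 3, M i t * M i t ≠ 0 := by decide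

lemma M_nonzero : ∀ i : Idx, ∃ t, M i t ≠ 0 := by decide

lemma Vc_inj : Function.Injective Vc := by
  intro i j h
  by_contra hij
  have hMt : ∀ t, M i t = M j t := fun t => by
    have := congrFun h t
    rw [hM, hM] at this
    exact_mod_cast this
  apply M_self i
  have e1 : ∑ t : Fin 3 × Fin 3 × Fin 3, M i t * M i t
      = ∑ t : Fin 3 × Fin 3 × Fin 3, M i t * M j t :=
    Finset.sum_congr rfl fun t _ => by rw [hMt t]
  rw [e1]
  exact M_dot i j hij


lemma hSet : Wset ∪ {x | ∃ k : Fin 4, x = fun t : Fin 3 × Fin 3 × Fin 3 =>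
      phiC k (t.1, t.2.1) * ket 0 t.2.2} = Set.range Vc := by
  ext x
  simp only [Wset, Set.mem_union, Set.mem_setOf_eq, Set.mem_range]
  constructor
  · rintro (((⟨k, rfl⟩ | ⟨i, j, rfl⟩) | ⟨i, j, rfl⟩) | ⟨k, rfl⟩)
    exacts [⟨.inl k, rfl⟩, ⟨.inr (.inl (i, j)), rfl⟩,
      ⟨.inr (.inr (.inl (i, j))), rfl⟩, ⟨.inr (.inr (.inr k)), rfl⟩]
  · rintro ⟨(k | ⟨i, j⟩ | ⟨i, j⟩ | k), rfl⟩
    exacts [Or.inl (Or.inl (Or.inl ⟨k, rfl⟩)), Or.inl (Or.inl (Or.inr ⟨i, j, rfl⟩)),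
      Or.inl (Or.inr ⟨i, j, rfl⟩), Or.inr ⟨k, rfl⟩]

/-- W is not a UCPB in the bipartition AB|C: there are four vectors
φ₆,…,φ₉ ∈ ℂ⁹ such that W together with the φₖ ⊗ |0⟩ is an orthogonal basis of
ℂ⁹ ⊗ ℂ³, i.e. 27 pairwise orthogonal nonzero vectors. -/
theorem stmt_14 :
    ∃ φ : Fin 4 → (Fin 3 × Fin 3 → ℂ),
      Set.ncard (Wset ∪
        {x | ∃ k : Fin 4, x = fun t : Fin 3 × Fin 3 × Fin 3 =>
          φ k (t.1, t.2.1) * ket 0 t.2.2}) = 27 ∧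
      (∀ x ∈ Wset ∪
        {x | ∃ k : Fin 4, x = fun t : Fin 3 × Fin 3 × Fin 3 =>
          φ k (t.1, t.2.1) * ket 0 t.2.2}, x ≠ 0) ∧
      (∀ x ∈ Wset ∪
        {x | ∃ k : Fin 4, x = fun t : Fin 3 × Fin 3 × Fin 3 =>
          φ k (t.1, t.2.1) * ket 0 t.2.2},
       ∀ y ∈ Wset ∪
        {x | ∃ k : Fin 4, x = fun t : Fin 3 × Fin 3 × Fin 3 =>
          φ k (t.1, t.2.1) * ket 0 t.2.2}, x ≠ y →
        ∑ t : Fin 3 × Fin 3 × Fin 3, (starRingEnd ℂ) (x t) * y t = 0) := by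
  refine ⟨phiC, ?_, ?_, ?_⟩ <;>
    rw [show Wset ∪ {x | ∃ k : Fin 4, x = fun t : Fin 3 × Fin 3 × Fin 3 =>
        phiC k (t.1, t.2.1) * ket 0 t.2.2} = Set.range Vc from hSet]
  · rw [← Set.image_univ, Set.ncard_image_of_injective _ Vc_inj, Set.ncard_univ]
    simp [Nat.card_eq_fintype_card]
  · rintro x ⟨i, rfl⟩ h0
    obtain ⟨t, ht⟩ := M_nonzero i
    apply ht
    have := congrFun h0 t
    rw [hM, Pi.zero_apply] at this
    exact_mod_cast this
  · rintro x ⟨i, rfl⟩ y ⟨j, rfl⟩ hxy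
    have hij : i ≠ j := fun h => hxy (by rw [h])
    have e : ∑ t : Fin 3 × Fin 3 × Fin 3, (starRingEnd ℂ) (Vc i t) * Vc j t
        = ((∑ t : Fin 3 × Fin 3 × Fin 3, M i t * M j t : ℤ) : ℂ) := by
      push_cast
      exact Finset.sum_congr rfl fun t _ => by rw [hM, hM, map_intCast]
    rw [e, M_dot i j hij, Int.cast_zero]

end
end
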